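/- arXiv:2509.24125 — 2 statements merged into one kernel-verified Lean document; each statement's English description precedes it below -/
import Mathlib

section
/- There exist weight matrices A^{(1)}, A^{(2)} (taken in a limiting/saturated-softmax sense) such that for every n×n permutation matrix P and every target Y ∈ ℝ^{n×n}, the two-layer disentangled transformer WITHOUT causal masking, given input X = [P; P·Y] with identity positional encodings, outputs Y exactly in a fixed n×n block of its final residual stream. -/
/-!
With saturating weights every attention head becomes a hard argmax. The first layer sends row `i`
to row `i mod n` of the input, so row `n + k` receives a copy of the row `P k`. In the second
layer the query of row `a` scores row `t` by the copied entry `P (t mod n) a`, plus one when `t`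
lies in the lower half; the unique maximiser is `t = n + π⁻¹ a`, and row `π⁻¹ a` of `P·Y` is `Y a`.
-/

open Matrix Filter

noncomputable def permMatrix {n : ℕ} (π : Equiv.Perm (Fin n)) : Matrix (Fin n) (Fin n) ℝ :=
  Matrix.of fun i j => if π i = j then (1 : ℝ) else 0

/-- Causal-mask-free softmax attention. -/
noncomputable def cmfAttn {T m : ℕ} (A : Matrix (Fin m) (Fin m) ℝ)
    (h : Matrix (Fin T) (Fin m) ℝ) : Matrix (Fin T) (Fin m) ℝ :=
  Matrix.of fun i k =>
    (∑ j : Fin T, Real.exp ((h * A * hᵀ) i j) * h j k) /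
    (∑ j : Fin T, Real.exp ((h * A * hᵀ) i j))

def stack {n : ℕ} (P Q : Matrix (Fin n) (Fin n) ℝ) : Matrix (Fin (n + n)) (Fin n) ℝ :=
  Matrix.of fun i => Fin.addCases (motive := fun _ => Fin n → ℝ) (fun i₁ => P i₁) (fun i₂ => Q i₂) i

/-- Embedding `[X, I_{2n}]` with one-hot positional encodings. -/
def embed {n : ℕ} (X : Matrix (Fin (n + n)) (Fin n) ℝ) :
    Matrix (Fin (n + n)) (Fin (n + (n + n))) ℝ :=
  Matrix.of fun i =>
    Fin.append (X i) (fun j : Fin (n + n) => if i = j then (1 : ℝ) else 0)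

/-- One disentangled causal-mask-free layer: concatenate the input with the attention output. -/
noncomputable def layerCMF {T m : ℕ} (A : Matrix (Fin m) (Fin m) ℝ)
    (h : Matrix (Fin T) (Fin m) ℝ) : Matrix (Fin T) (Fin (m + m)) ℝ :=
  Matrix.of fun i => Fin.append (h i) (cmfAttn A h i)

open Topology

lemma tendsto_exp_mul_zero_of_tendsto_neg {f : ℝ → ℝ} {c : ℝ} (hf : Tendsto f atTop (𝓝 c))
    (hc : c < 0) : Tendsto (fun β => Real.exp (β * f β)) atTop (𝓝 0) :=
  Real.tendsto_exp_atBot.comp (tendsto_id.atTop_mul_neg hc hf)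

lemma tendsto_softmax_sum {ι : Type*} [Fintype ι] {s v : ι → ℝ → ℝ}
    {G x : ι → ℝ} {j₀ : ι} (hs : ∀ j, Tendsto (s j) atTop (𝓝 (G j)))
    (hmax : ∀ j, j ≠ j₀ → G j < G j₀) (hv : ∀ j, Tendsto (v j) atTop (𝓝 (x j))) :
    Tendsto (fun β => (∑ j, Real.exp (β * s j β) * v j β) / ∑ j, Real.exp (β * s j β))
      atTop (𝓝 (x j₀)) := by
  classical
  -- dividing by the dominant weight `exp (β * s j₀ β)` makes the `j`-th weight tend to `δ j j₀`
  have hw : ∀ j, Tendsto (fun β => Real.exp (β * s j β) / Real.exp (β * s j₀ β)) atTop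
      (𝓝 (if j = j₀ then 1 else 0)) := by
    intro j
    simp_rw [← Real.exp_sub, ← mul_sub]
    by_cases hj : j = j₀
    · simp [hj]
    · rw [if_neg hj]
      exact tendsto_exp_mul_zero_of_tendsto_neg ((hs j).sub (hs j₀)) (by linarith [hmax j hj])
  have hnum := tendsto_finsetSum Finset.univ fun j _ => (hw j).mul (hv j)
  have hden := tendsto_finsetSum Finset.univ fun j _ => hw j
  simp only [ite_mul, one_mul, zero_mul, Finset.sum_ite_eq', Finset.mem_univ, if_true] at hnum hden
  refine (div_one (x j₀) ▸ hnum.div hden one_ne_zero).congr fun β => ?_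
  simp only [div_mul_eq_mul_div, ← Finset.sum_div]
  exact div_div_div_cancel_right₀ (Real.exp_pos _).ne' _ _

lemma cmfAttn_smul_apply {T m : ℕ} (β : ℝ) (B : Matrix (Fin m) (Fin m) ℝ)
    (h : Matrix (Fin T) (Fin m) ℝ) (i : Fin T) (k : Fin m) :
    cmfAttn (β • B) h i k = (∑ j, Real.exp (β * (h * B * hᵀ) i j) * h j k) /
      ∑ j, Real.exp (β * (h * B * hᵀ) i j) := by
  simp only [cmfAttn, Matrix.of_apply, Matrix.mul_smul, Matrix.smul_mul, Matrix.smul_apply,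
    smul_eq_mul]

lemma tendsto_cmfAttn_smul {T m : ℕ} {B : Matrix (Fin m) (Fin m) ℝ}
    {h : ℝ → Matrix (Fin T) (Fin m) ℝ} {i j₀ : Fin T} {k : Fin m} {G x : Fin T → ℝ}
    (hscore : ∀ j, Tendsto (fun β => (h β * B * (h β)ᵀ) i j) atTop (𝓝 (G j)))
    (hmax : ∀ j, j ≠ j₀ → G j < G j₀) (hval : ∀ j, Tendsto (fun β => h β j k) atTop (𝓝 (x j))) :
    Tendsto (fun β => cmfAttn (β • B) (h β) i k) atTop (𝓝 (x j₀)) := by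
  simpa only [cmfAttn_smul_apply] using tendsto_softmax_sum hscore hmax hval

lemma mul_single_mul_transpose_apply {T m : ℕ} (h : Matrix (Fin T) (Fin m) ℝ) (u v : Fin m)
    (c : ℝ) (i j : Fin T) : (h * Matrix.single u v c * hᵀ) i j = h i u * c * h j v := by
  simp [Matrix.mul_apply, Matrix.single_apply, ite_and]

section Construction

variable {n : ℕ}

def foldHalves : Fin (n + n) → Fin n :=
  Fin.addCases (motive := fun _ => Fin n) id id

@[simp] lemma foldHalves_castAdd (k : Fin n) : foldHalves (Fin.castAdd n k) = k :=
  Fin.addCases_left k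

@[simp] lemma foldHalves_natAdd (k : Fin n) : foldHalves (Fin.natAdd n k) = k :=
  Fin.addCases_right k

@[simp] lemma stack_castAdd (P Q : Matrix (Fin n) (Fin n) ℝ) (i : Fin n) :
    stack P Q (Fin.castAdd n i) = P i :=
  Fin.addCases_left (motive := fun _ => Fin n → ℝ) i

@[simp] lemma stack_natAdd (P Q : Matrix (Fin n) (Fin n) ℝ) (i : Fin n) :
    stack P Q (Fin.natAdd n i) = Q i :=
  Fin.addCases_right (motive := fun _ => Fin n → ℝ) i

@[simp] lemma embed_castAdd (X : Matrix (Fin (n + n)) (Fin n) ℝ) (i : Fin (n + n)) (p : Fin n) :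
    embed X i (Fin.castAdd (n + n) p) = X i p := by
  simp [embed]

@[simp] lemma embed_natAdd (X : Matrix (Fin (n + n)) (Fin n) ℝ) (i q : Fin (n + n)) :
    embed X i (Fin.natAdd n q) = if i = q then 1 else 0 := by
  simp [embed]

@[simp] lemma layerCMF_castAdd {T m : ℕ} (A : Matrix (Fin m) (Fin m) ℝ)
    (h : Matrix (Fin T) (Fin m) ℝ) (i : Fin T) (p : Fin m) :
    layerCMF A h i (Fin.castAdd m p) = h i p :=
  Fin.append_left _ _ _

@[simp] lemma layerCMF_natAdd {T m : ℕ} (A : Matrix (Fin m) (Fin m) ℝ)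
    (h : Matrix (Fin T) (Fin m) ℝ) (i : Fin T) (p : Fin m) :
    layerCMF A h i (Fin.natAdd m p) = cmfAttn A h i p :=
  Fin.append_right _ _ _

lemma permMatrix_mul_apply (π : Equiv.Perm (Fin n)) (Y : Matrix (Fin n) (Fin n) ℝ) (i j : Fin n) :
    (permMatrix π * Y) i j = Y (π i) j := by
  simp [permMatrix, Matrix.mul_apply]

-- Position `q` queries position `q mod n` of the upper half.
def copyWeights (n : ℕ) : Matrix (Fin (n + (n + n))) (Fin (n + (n + n))) ℝ :=
  ∑ q : Fin (n + n), Matrix.single (Fin.natAdd n q) (Fin.natAdd n (Fin.castAdd n (foldHalves q))) 1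

lemma embed_mul_copyWeights_mul_transpose_apply (X : Matrix (Fin (n + n)) (Fin n) ℝ)
    (i j : Fin (n + n)) :
    (embed X * copyWeights n * (embed X)ᵀ) i j =
      if j = Fin.castAdd n (foldHalves i) then 1 else 0 := by
  simp only [copyWeights, Matrix.mul_sum, Matrix.sum_mul, Matrix.sum_apply,
    mul_single_mul_transpose_apply, embed_natAdd, mul_one]
  rw [Finset.sum_eq_single i] <;> aesop

lemma tendsto_cmfAttn_copyWeights (X : Matrix (Fin (n + n)) (Fin n) ℝ) (i : Fin (n + n))
    (k : Fin (n + (n + n))) :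
    Tendsto (fun β : ℝ => cmfAttn (β • copyWeights n) (embed X) i k) atTop
      (𝓝 (embed X (Fin.castAdd n (foldHalves i)) k)) := by
  refine tendsto_cmfAttn_smul (h := fun _ => embed X)
    (G := fun j => if j = Fin.castAdd n (foldHalves i) then 1 else 0)
    (fun j => ?_) (fun j hj => ?_) (fun j => tendsto_const_nhds)
  · simp only [embed_mul_copyWeights_mul_transpose_apply]
    exact tendsto_const_nhds
  · simp [hj]

-- Position `p < n` queries the layer-1 copy of input column `p`, plus every lower-half position.
def readWeights (n : ℕ) :
    Matrix (Fin ((n + (n + n)) + (n + (n + n)))) (Fin ((n + (n + n)) + (n + (n + n)))) ℝ :=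
  ∑ p : Fin n, (Matrix.single (Fin.castAdd _ (Fin.natAdd n (Fin.castAdd n p)))
      (Fin.natAdd _ (Fin.castAdd (n + n) p)) 1 +
    ∑ q : Fin n, Matrix.single (Fin.castAdd _ (Fin.natAdd n (Fin.castAdd n p)))
      (Fin.castAdd _ (Fin.natAdd n (Fin.natAdd n q))) 1)

lemma layerCMF_mul_readWeights_mul_transpose_apply (X : Matrix (Fin (n + n)) (Fin n) ℝ)
    (A : Matrix (Fin (n + (n + n))) (Fin (n + (n + n))) ℝ) (a : Fin n) (t : Fin (n + n)) :
    (layerCMF A (embed X) * readWeights n * (layerCMF A (embed X))ᵀ) (Fin.castAdd n a) t =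
      cmfAttn A (embed X) t (Fin.castAdd (n + n) a) +
        ∑ q : Fin n, if t = Fin.natAdd n q then 1 else 0 := by
  simp only [readWeights, Matrix.mul_sum, Matrix.sum_mul, Matrix.sum_apply, Matrix.mul_add,
    Matrix.add_mul, Matrix.add_apply, mul_single_mul_transpose_apply, layerCMF_castAdd,
    layerCMF_natAdd, embed_natAdd, Fin.castAdd_inj, mul_one, ite_mul, one_mul, zero_mul,
    Finset.sum_add_distrib]
  simp

noncomputable def readScoreLimit (π : Equiv.Perm (Fin n)) (a : Fin n) : Fin (n + n) → ℝ :=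
  Fin.addCases (fun k => permMatrix π k a) (fun k => permMatrix π k a + 1)

lemma tendsto_readScoreLimit (π : Equiv.Perm (Fin n)) (Q : Matrix (Fin n) (Fin n) ℝ) (a : Fin n)
    (t : Fin (n + n)) :
    Tendsto (fun β : ℝ =>
        (layerCMF (β • copyWeights n) (embed (stack (permMatrix π) Q)) * readWeights n *
          (layerCMF (β • copyWeights n) (embed (stack (permMatrix π) Q)))ᵀ) (Fin.castAdd n a) t)
      atTop (𝓝 (readScoreLimit π a t)) := by
  simp only [layerCMF_mul_readWeights_mul_transpose_apply]
  convert (tendsto_cmfAttn_copyWeights _ t _).add_const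
    (∑ q : Fin n, if t = Fin.natAdd n q then (1 : ℝ) else 0) using 2
  induction t using Fin.addCases with
  | left k =>
    have hk : ∀ q, Fin.castAdd n k ≠ Fin.natAdd n q := fun q h => by
      simp only [Fin.ext_iff, Fin.val_castAdd, Fin.val_natAdd] at h
      omega
    simp [readScoreLimit, hk, -Fin.natAdd_eq_addNat]
  | right k => simp [readScoreLimit, -Fin.natAdd_eq_addNat]

lemma readScoreLimit_lt (π : Equiv.Perm (Fin n)) (a : Fin n) {t : Fin (n + n)}
    (ht : t ≠ Fin.natAdd n (π.symm a)) :
    readScoreLimit π a t < readScoreLimit π a (Fin.natAdd n (π.symm a)) := by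
  induction t using Fin.addCases with
  | left k =>
    simp only [readScoreLimit, Fin.addCases_left, Fin.addCases_right, permMatrix, Matrix.of_apply,
      Equiv.apply_symm_apply, if_true]
    split_ifs <;> norm_num
  | right k =>
    have hk : π k ≠ a := fun h => ht (by rw [← h, Equiv.symm_apply_apply])
    simp [readScoreLimit, permMatrix, hk, -Fin.natAdd_eq_addNat]

end Construction

/-- There exist weight matrices (in the saturated-softmax limit `A⁽ⁱ⁾ = β·B⁽ⁱ⁾`, `β → ∞`)
such that for every permutation matrix `P` and target `Y`, the two-layer disentangled
transformer WITHOUT causal masking on input `[P; P·Y]` with identity positional encodings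
outputs `Y` exactly in a fixed `n × n` block of its final residual stream. -/
theorem stmt10 {n : ℕ} :
    ∃ (B1 : Matrix (Fin (n + (n + n))) (Fin (n + (n + n))) ℝ)
      (B2 : Matrix (Fin ((n + (n + n)) + (n + (n + n)))) (Fin ((n + (n + n)) + (n + (n + n)))) ℝ)
      (r c : ℕ) (hr : r + n ≤ n + n)
      (hc : c + n ≤ ((n + (n + n)) + (n + (n + n))) + ((n + (n + n)) + (n + (n + n)))),
      ∀ (π : Equiv.Perm (Fin n)) (Y : Matrix (Fin n) (Fin n) ℝ) (a b : Fin n),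
        Tendsto
          (fun β : ℝ =>
            layerCMF (β • B2) (layerCMF (β • B1) (embed (stack (permMatrix π) (permMatrix π * Y))))
              ⟨r + a.val, by have := a.isLt; omega⟩
              ⟨c + b.val, by have := b.isLt; omega⟩)
          atTop (nhds (Y a b)) := by
  refine ⟨copyWeights n, readWeights n, 0, (n + (n + n)) + (n + (n + n)), by omega, by omega,
    fun π Y a b => ?_⟩
  have key := tendsto_cmfAttn_smul (B := readWeights n) (k := Fin.castAdd _ (Fin.castAdd (n + n) b))
    (tendsto_readScoreLimit π (permMatrix π * Y) a) (fun t => readScoreLimit_lt π a)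
    (x := fun t => stack (permMatrix π) (permMatrix π * Y) t b)
    (fun t => by simpa only [layerCMF_castAdd, embed_castAdd] using tendsto_const_nhds)
  simp only [stack_natAdd, permMatrix_mul_apply, Equiv.apply_symm_apply] at key
  convert key using 2 with β
  have hrow : (⟨0 + a.val, by omega⟩ : Fin (n + n)) = Fin.castAdd n a := Fin.ext (zero_add _)
  rw [hrow]
  exact layerCMF_natAdd _ _ _ (Fin.castAdd _ (Fin.castAdd (n + n) b))
end

section
/- For a block pre-activation matrix over 2n rows of the form [[C, β·Pᵀ],[0, 0]] where every entry of C lies in [0, 1) and P is an n×n permutation matrix, the full (unmasked) row-wise softmax converges as β → ∞ to [[0, Pᵀ],[(1/2n)𝟙𝟙ᵀ, (1/2n)𝟙𝟙ᵀ]]. -/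
open Matrix Filter

noncomputable def rowSoftmax {T m : ℕ} (M : Matrix (Fin T) (Fin m) ℝ) :
    Matrix (Fin T) (Fin m) ℝ :=
  Matrix.of fun i j => Real.exp (M i j) / ∑ k : Fin m, Real.exp (M i k)

/-- The block matrix `[[C, β·Pᵀ], [0, 0]] ∈ ℝ^{2n × 2n}`. -/
noncomputable def blockPre {n : ℕ} (C : Matrix (Fin n) (Fin n) ℝ)
    (P : Matrix (Fin n) (Fin n) ℝ) (β : ℝ) : Matrix (Fin (n + n)) (Fin (n + n)) ℝ :=
  Matrix.of fun i j =>
    Fin.addCases (motive := fun _ => ℝ)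
      (fun i₁ =>
        Fin.addCases (motive := fun _ => ℝ) (fun j₁ => C i₁ j₁) (fun j₂ => β * Pᵀ i₁ j₂) j)
      (fun _ => 0) i

/-- The limit matrix `[[0, Pᵀ], [(1/2n)𝟙𝟙ᵀ, (1/2n)𝟙𝟙ᵀ]]`. -/
noncomputable def blockLim {n : ℕ} (P : Matrix (Fin n) (Fin n) ℝ) :
    Matrix (Fin (n + n)) (Fin (n + n)) ℝ :=
  Matrix.of fun i j =>
    Fin.addCases (motive := fun _ => ℝ)
      (fun i₁ => Fin.addCases (motive := fun _ => ℝ) (fun _ => 0) (fun j₂ => Pᵀ i₁ j₂) j)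
      (fun _ => 1 / (2 * n)) i

/-
In each of the top rows the entry `β` sits at the column `n + π⁻¹ i` and every other entry is
independent of `β`. Softmax is invariant under shifting a row by a constant, so subtracting `β`
leaves that entry fixed while all others tend to `-∞`; their exponentials vanish and the row
tends to the indicator of that column. The bottom rows are zero, so their softmax is uniform.
-/

section Softmax

open Real

noncomputable def softmax {ι : Type*} [Fintype ι] (v : ι → ℝ) : ι → ℝ :=
  fun j => exp (v j) / ∑ k, exp (v k)

variable {ι : Type*} [Fintype ι]

theorem softmax_add_const (v : ι → ℝ) (b : ℝ) :
    softmax (fun k => v k + b) = softmax v := by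
  funext j
  simp only [softmax, exp_add, ← Finset.sum_mul]
  exact mul_div_mul_right _ _ (exp_pos b).ne'

theorem softmax_const (b : ℝ) (j : ι) :
    softmax (fun _ : ι => b) j = 1 / Fintype.card ι := by
  simp only [softmax, Finset.sum_const, Finset.card_univ, nsmul_eq_mul]
  field_simp [(exp_pos b).ne']

theorem tendsto_softmax_add_smul_single [DecidableEq ι] (c : ι → ℝ) (a : ι) :
    Tendsto (fun β : ℝ => softmax (c + β • Pi.single a 1)) atTop (nhds (Pi.single a 1)) := by
  have hshift : ∀ β : ℝ, softmax (c + β • Pi.single a 1) =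
      softmax (fun k => c k + β * ((Pi.single a 1 : ι → ℝ) k - 1)) := by
    intro β
    rw [← softmax_add_const _ (-β)]
    congr 1
    funext k
    simp only [Pi.add_apply, Pi.smul_apply, smul_eq_mul]
    ring
  have hexp : ∀ k, Tendsto (fun β : ℝ => exp (c k + β * ((Pi.single a 1 : ι → ℝ) k - 1))) atTop
      (nhds (if k = a then exp (c a) else 0)) := by
    intro k
    by_cases hk : k = a
    · subst hk
      simp
    · simp only [Pi.single_apply, hk, if_false, zero_sub, mul_neg_one]
      exact tendsto_exp_atBot.comp (tendsto_atBot_add_const_left _ _ tendsto_neg_atTop_atBot)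
  have hsum : Tendsto (fun β : ℝ => ∑ k, exp (c k + β * ((Pi.single a 1 : ι → ℝ) k - 1))) atTop
      (nhds (exp (c a))) := by
    simpa using tendsto_finsetSum Finset.univ fun k _ => hexp k
  simp only [hshift]
  refine tendsto_pi_nhds.2 fun j => ?_
  have hlim : (if j = a then exp (c a) else 0) / exp (c a) = (Pi.single a 1 : ι → ℝ) j := by
    by_cases hj : j = a <;> simp [hj, (exp_pos (c a)).ne']
  rw [← hlim]
  exact (hexp j).div hsum (exp_pos (c a)).ne'

end Softmax

theorem rowSoftmax_apply {T m : ℕ} (M : Matrix (Fin T) (Fin m) ℝ) (i : Fin T) (j : Fin m) :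
    rowSoftmax M i j = softmax (M i) j :=
  rfl

theorem permMatrix_transpose_apply {n : ℕ} (π : Equiv.Perm (Fin n)) (i j : Fin n) :
    (permMatrix π)ᵀ i j = (Pi.single (π.symm i) 1 : Fin n → ℝ) j := by
  simp [permMatrix, Pi.single_apply, Equiv.eq_symm_apply]

theorem Fin.castAdd_ne_natAdd {m n : ℕ} (i : Fin m) (j : Fin n) :
    Fin.castAdd n i ≠ Fin.natAdd m j := by
  simp only [ne_eq, Fin.ext_iff, Fin.val_castAdd, Fin.val_natAdd]
  omega

theorem blockPre_natAdd {n : ℕ} (C P : Matrix (Fin n) (Fin n) ℝ) (β : ℝ) (i : Fin n) :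
    blockPre C P β (Fin.natAdd n i) = 0 := by
  funext j
  simp only [blockPre, of_apply, Fin.addCases_right, Pi.zero_apply]

theorem blockPre_castAdd_permMatrix {n : ℕ} (π : Equiv.Perm (Fin n))
    (C : Matrix (Fin n) (Fin n) ℝ) (β : ℝ) (i : Fin n) :
    blockPre C (permMatrix π) β (Fin.castAdd n i) =
      Fin.append (C i) 0 + β • Pi.single (Fin.natAdd n (π.symm i)) 1 := by
  funext j
  induction j using Fin.addCases with
  | left j =>
    simp only [blockPre, of_apply, Fin.addCases_left, Fin.append_left, Pi.add_apply,
      Pi.smul_apply, Pi.single_eq_of_ne (Fin.castAdd_ne_natAdd j _), smul_zero, add_zero]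
  | right j =>
    simp only [blockPre, of_apply, Fin.addCases_left, Fin.addCases_right, Fin.append_right,
      permMatrix_transpose_apply, Pi.add_apply, Pi.smul_apply, Pi.single_apply,
      (Fin.natAdd_injective n n).eq_iff]
    simp

theorem blockLim_castAdd_permMatrix {n : ℕ} (π : Equiv.Perm (Fin n)) (i : Fin n) :
    blockLim (permMatrix π) (Fin.castAdd n i) = Pi.single (Fin.natAdd n (π.symm i)) 1 := by
  funext j
  induction j using Fin.addCases with
  | left j =>
    simp only [blockLim, of_apply, Fin.addCases_left, Pi.single_eq_of_ne (Fin.castAdd_ne_natAdd j _)]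
  | right j =>
    simp only [blockLim, of_apply, Fin.addCases_left, Fin.addCases_right,
      permMatrix_transpose_apply, Pi.single_apply, (Fin.natAdd_injective n n).eq_iff]

theorem stmt18_general {n : ℕ} (π : Equiv.Perm (Fin n)) (C : Matrix (Fin n) (Fin n) ℝ) :
    ∀ i j : Fin (n + n),
      Tendsto (fun β : ℝ => rowSoftmax (blockPre C (permMatrix π) β) i j) atTop
        (nhds (blockLim (permMatrix π) i j)) := by
  intro i j
  simp only [rowSoftmax_apply]
  induction i using Fin.addCases with
  | left i =>
    simp only [blockPre_castAdd_permMatrix, blockLim_castAdd_permMatrix]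
    exact tendsto_pi_nhds.1 (tendsto_softmax_add_smul_single _ _) j
  | right i =>
    have hlim : blockLim (permMatrix π) (Fin.natAdd n i) j = 1 / Fintype.card (Fin (n + n)) := by
      simp only [blockLim, of_apply, Fin.addCases_right, Fintype.card_fin]
      push_cast
      ring
    simp only [blockPre_natAdd, hlim]
    exact tendsto_const_nhds.congr fun β => (softmax_const 0 j).symm

/-- For a block pre-activation `[[C, β·Pᵀ],[0,0]]` with all entries of `C` in `[0,1)` and
`P` a permutation matrix, the full (unmasked) row-wise softmax converges as `β → ∞` to
`[[0, Pᵀ],[(1/2n)𝟙𝟙ᵀ, (1/2n)𝟙𝟙ᵀ]]`. -/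
theorem stmt18 {n : ℕ} (π : Equiv.Perm (Fin n)) (C : Matrix (Fin n) (Fin n) ℝ)
    (hC : ∀ i j, 0 ≤ C i j ∧ C i j < 1) :
    ∀ i j : Fin (n + n),
      Tendsto (fun β : ℝ => rowSoftmax (blockPre C (permMatrix π) β) i j) atTop
        (nhds (blockLim (permMatrix π) i j)) :=
  stmt18_general π C
end
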